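/- arXiv:1010.4220 — 4 statements merged into one kernel-verified Lean document; each statement's English description precedes it below -/
import Mathlib

section
/- Let A and B be groups and let P = A ∗ B be their free product, with canonical embeddings inl : A → P and inr : B → P. For every u ∈ P there exists a ∈ A such that, setting u' = inl(a)·u, the canonical homomorphism from the free product A ∗ ⟨u'⟩ (the free product of A with the subgroup of P generated by u') into P, induced by inl on the factor A and by the subgroup inclusion on the factor ⟨u'⟩, is injective, and its image is the subgroup of P generated by inl(A) ∪ {u}. In other words, ⟨A, u⟩ = A ∗ ⟨u'⟩ for some u' ∈ A·u. -/
/-!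
View `A ∗ B` as the free product of its two factors indexed by `Bool`, so that its nontrivial
elements have reduced words. Multiplying `u` on the left by a suitable element of `A` gives
`u' = c w c⁻¹` with `c ∈ A` and `w` a reduced word beginning and ending with letters of `B`
(or `u' = 1`). Every nontrivial power of such a `w` again begins and ends in `B`: either the
extreme letters of `w` do not cancel, or `w` is a conjugate of a shorter word of the same kind.
After conjugating by `c⁻¹`, a reduced word of `A ∗ ⟨u'⟩` is therefore sent to a concatenation of
single letters of `A` alternating with reduced words that begin and end in `B`, which is again
reduced, hence nontrivial. Finally `⟨A, u'⟩ = ⟨A, u⟩` because `u' ∈ A u`.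
-/

open Monoid Function

namespace Monoid.CoprodI

section Monoid

variable {ι : Type*} {M : ι → Type*} [∀ i, Monoid (M i)]

theorem NeWord.prod_ne_one {i j : ι} (w : NeWord M i j) : w.prod ≠ 1 := by
  classical
  intro h
  have : w.toWord = Word.empty := Word.equiv.symm.injective (h.trans Word.prod_empty.symm)
  exact w.toList_ne_nil (congrArg Word.toList this)

theorem exists_neWord_prod_eq {q : CoprodI M} (hq : q ≠ 1) :
    ∃ (i j : ι) (w : NeWord M i j), w.prod = q := by
  classical
  have hne : Word.equiv q ≠ Word.empty := fun h => hq <| by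
    rw [← Word.equiv.symm_apply_apply q, h]; exact Word.prod_empty
  obtain ⟨i, j, w, hw⟩ := NeWord.of_word _ hne
  exact ⟨i, j, w, by rw [NeWord.prod, hw]; exact Word.equiv.symm_apply_apply q⟩

variable (M) in
/-- The elements whose reduced word begins with a letter of `M i` and ends with one of `M j`. -/
def neWordProds (i j : ι) : Set (CoprodI M) := Set.range (NeWord.prod (M := M) (i := i) (j := j))

theorem one_notMem_neWordProds (i j : ι) : (1 : CoprodI M) ∉ neWordProds M i j :=
  fun ⟨w, hw⟩ => w.prod_ne_one hw

theorem of_mem_neWordProds {i : ι} {m : M i} (hm : m ≠ 1) : of m ∈ neWordProds M i i :=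
  ⟨.singleton m hm, NeWord.prod_singleton m hm⟩

theorem mul_mem_neWordProds {i j k l : ι} {p q : CoprodI M} (hjk : j ≠ k)
    (hp : p ∈ neWordProds M i j) (hq : q ∈ neWordProds M k l) : p * q ∈ neWordProds M i l := by
  obtain ⟨v, rfl⟩ := hp
  obtain ⟨w, rfl⟩ := hq
  exact ⟨.append v hjk w, NeWord.append_prod⟩

theorem mul_pow_mul_mem_neWordProds {i j k l : ι} {p x : CoprodI M} (hli : l ≠ i) (hjk : j ≠ k)
    (hp : p ∈ neWordProds M k l) (hx : x ∈ neWordProds M i j) (n : ℕ) :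
    (p * x) ^ n * p ∈ neWordProds M k l := by
  induction n with
  | zero => simpa using hp
  | succ n ih =>
    rw [pow_succ', mul_assoc]
    exact mul_mem_neWordProds hjk (mul_mem_neWordProds hli hp hx) ih

theorem pow_succ_mem_neWordProds {i j : ι} {p : CoprodI M} (hij : i ≠ j)
    (hp : p ∈ neWordProds M i j) (n : ℕ) : p ^ (n + 1) ∈ neWordProds M i j := by
  induction n with
  | zero => simpa using hp
  | succ n ih => rw [pow_succ]; exact mul_mem_neWordProds hij.symm ih hp

theorem NeWord.prod_eq_of_or_of_mul_prod {i j : ι} (w : NeWord M i j) :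
    (i = j ∧ ∃ m : M i, w.prod = of m) ∨
    ∃ (k : ι) (m : M i) (t : NeWord M k j), m ≠ 1 ∧ k ≠ i ∧
      w.prod = of m * t.prod ∧ t.toList.length < w.toList.length := by
  induction w with
  | singleton x _ => exact .inl ⟨rfl, x, prod_singleton ..⟩
  | @append i j k l w₁ hjk w₂ ih₁ _ =>
    have hlen := List.length_pos_iff.mpr w₁.toList_ne_nil
    rcases ih₁ with ⟨rfl, m, hm⟩ | ⟨k', m, t, hm, hk', hw₁, ht⟩
    · refine .inr ⟨k, m, w₂, fun h => w₁.prod_ne_one ?_, hjk.symm, ?_, ?_⟩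
      · rw [hm, h, map_one]
      · rw [append_prod, hm]
      · simp only [toList, List.length_append]; omega
    · refine .inr ⟨k', m, .append t hjk w₂, hm, hk', ?_, ?_⟩
      · rw [append_prod, append_prod, hw₁, mul_assoc]
      · simp only [toList, List.length_append]; omega

end Monoid

section Group

variable {ι : Type*} {M : ι → Type*} [∀ i, Group (M i)]

theorem inv_mem_neWordProds {i j : ι} {p : CoprodI M} (hp : p ∈ neWordProds M i j) :
    p⁻¹ ∈ neWordProds M j i := by
  obtain ⟨w, rfl⟩ := hp
  exact ⟨w.inv, NeWord.inv_prod w⟩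

theorem NeWord.length_toList_inv {i j : ι} (w : NeWord M i j) :
    w.inv.toList.length = w.toList.length := by
  induction w with
  | singleton => rfl
  | append _ _ _ ih₁ ih₂ => simp [inv, ih₁, ih₂, Nat.add_comm]

theorem NeWord.prod_eq_of_or_prod_mul_of {i j : ι} (w : NeWord M i j) :
    (i = j ∧ ∃ m : M j, w.prod = of m) ∨
    ∃ (k : ι) (m : M j) (t : NeWord M i k), m ≠ 1 ∧ k ≠ j ∧
      w.prod = t.prod * of m ∧ t.toList.length < w.toList.length := by
  have hw : w.prod = w.inv.prod⁻¹ := by rw [inv_prod, inv_inv]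
  rcases w.inv.prod_eq_of_or_of_mul_prod with ⟨rfl, m, hm⟩ | ⟨k, m, t, hm, hk, ht, hlen⟩
  · exact .inl ⟨rfl, m⁻¹, by rw [hw, hm, map_inv]⟩
  · refine .inr ⟨k, m⁻¹, t.inv, inv_ne_one.mpr hm, hk, ?_, ?_⟩
    · rw [hw, ht, mul_inv_rev, inv_prod, map_inv]
    · rwa [length_toList_inv, ← length_toList_inv w]

theorem NeWord.pow_mem_neWordProds {i : ι} (w : NeWord M i i) (n : ℕ) (h : w.prod ^ n ≠ 1) :
    w.prod ^ n ∈ neWordProds M i i := by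
  induction hlen : w.toList.length using Nat.strong_induction_on generalizing i w n with
  | _ N ih =>
  obtain ⟨n, rfl⟩ : ∃ n', n = n' + 1 :=
    Nat.exists_eq_add_one_of_ne_zero (by rintro rfl; exact h (pow_zero _))
  rcases w.prod_eq_of_or_of_mul_prod with ⟨-, m, hm⟩ | ⟨k, m₁, t, hm₁, hki, hw, htw⟩
  · rw [hm, ← map_pow] at h ⊢
    exact of_mem_neWordProds fun h' => h (by rw [h', map_one])
  rcases t.prod_eq_of_or_prod_mul_of with ⟨rfl, -⟩ | ⟨l, m₂, mid, hm₂, hli, ht, hmid⟩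
  · exact absurd rfl hki
  have hw : w.prod = of m₁ * mid.prod * of m₂ := by rw [hw, ht, mul_assoc]
  suffices ∃ q ∈ neWordProds M k l, w.prod ^ (n + 1) = of m₁ * q * of m₂ by
    obtain ⟨q, hq, hwq⟩ := this
    rw [hwq]
    exact mul_mem_neWordProds hli
      (mul_mem_neWordProds hki.symm (of_mem_neWordProds hm₁) hq) (of_mem_neWordProds hm₂)
  by_cases hm : m₂ * m₁ = 1
  · have hwpow : w.prod ^ (n + 1) = of m₁ * mid.prod ^ (n + 1) * of m₂ := by
      rw [hw, eq_inv_of_mul_eq_one_left hm, map_inv, conj_pow]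
    refine ⟨_, ?_, hwpow⟩
    by_cases hkl : k = l
    · subst hkl
      exact ih _ (by omega) mid (n + 1) (fun h' => h (by rw [hwpow, h', mul_one,
        eq_inv_of_mul_eq_one_left hm, map_inv, mul_inv_cancel])) rfl
    · exact pow_succ_mem_neWordProds hkl ⟨mid, rfl⟩ n
  · refine ⟨(mid.prod * of (m₂ * m₁)) ^ n * mid.prod,
      mul_pow_mul_mem_neWordProds hli hki.symm ⟨mid, rfl⟩ (of_mem_neWordProds hm) n, ?_⟩
    rw [hw, map_mul, mul_assoc (of m₁), pow_succ, ← mul_assoc, mul_pow_mul]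
    simp only [mul_assoc]

theorem zpow_mem_neWordProds {i : ι} {p : CoprodI M} (hp : p ∈ neWordProds M i i) (n : ℤ)
    (h : p ^ n ≠ 1) : p ^ n ∈ neWordProds M i i := by
  obtain ⟨w, rfl⟩ := hp
  obtain ⟨n, rfl | rfl⟩ := Int.eq_nat_or_neg n
  · rw [zpow_natCast] at h ⊢
    exact w.pow_mem_neWordProds n h
  · rw [zpow_neg, zpow_natCast, inv_ne_one] at h
    rw [zpow_neg, zpow_natCast]
    exact inv_mem_neWordProds (w.pow_mem_neWordProds n h)

theorem injective_of_map_of_mem_conj_neWordProds {H : ι → Type*} [∀ i, Group (H i)]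
    (φ : CoprodI H →* CoprodI M) (g : CoprodI M)
    (hφ : ∀ i (h : H i), h ≠ 1 → ∃ p ∈ neWordProds M i i, φ (of h) = g * p * g⁻¹) :
    Injective φ := by
  have hword : ∀ {i j} (w : NeWord H i j), ∃ p ∈ neWordProds M i j, φ w.prod = g * p * g⁻¹ := by
    intro i j w
    induction w with
    | singleton h hh => simpa using hφ _ h hh
    | append _ hjk _ ih₁ ih₂ =>
      obtain ⟨p₁, hp₁, h₁⟩ := ih₁
      obtain ⟨p₂, hp₂, h₂⟩ := ih₂
      exact ⟨p₁ * p₂, mul_mem_neWordProds hjk hp₁ hp₂, by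
        rw [NeWord.append_prod, map_mul, h₁, h₂]; group⟩
  refine (injective_iff_map_eq_one φ).mpr fun x hx => by_contra fun hx1 => ?_
  obtain ⟨i, j, w, rfl⟩ := exists_neWord_prod_eq hx1
  obtain ⟨p, hp, hwp⟩ := hword w
  rw [hwp, conj_eq_one_iff] at hx
  exact one_notMem_neWordProds i j (hx ▸ hp)

theorem exists_of_mul_eq_one_or_conj {M : Bool → Type*} [∀ b, Group (M b)] (q : CoprodI M) :
    ∃ a c : M false, of a * q = 1 ∨
      ∃ p ∈ neWordProds M true true, of a * q = of c * p * (of c)⁻¹ := by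
  have hstart : ∀ {j} (t : NeWord M true j), ∃ a c : M false,
      ∃ p ∈ neWordProds M true true, of a * t.prod = of c * p * (of c)⁻¹ := by
    intro j t
    cases j with
    | true => exact ⟨1, 1, t.prod, ⟨t, rfl⟩, by simp⟩
    | false =>
      rcases t.prod_eq_of_or_prod_mul_of with ⟨h, -⟩ | ⟨k, m, s, -, hk, hs, -⟩
      · cases h
      · obtain rfl : k = true := by simpa using hk
        exact ⟨m⁻¹, m⁻¹, s.prod, ⟨s, rfl⟩, by rw [hs, map_inv, inv_inv]; group⟩
  by_cases hq : q = 1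
  · exact ⟨1, 1, .inl (by simp [hq])⟩
  obtain ⟨i, j, w, rfl⟩ := exists_neWord_prod_eq hq
  cases i with
  | true =>
    obtain ⟨a, c, h⟩ := hstart w
    exact ⟨a, c, .inr h⟩
  | false =>
    rcases w.prod_eq_of_or_of_mul_prod with ⟨-, m, hm⟩ | ⟨k, m, t, -, hk, hw, -⟩
    · exact ⟨m⁻¹, 1, .inl (by rw [hm, ← map_mul, inv_mul_cancel, map_one])⟩
    · obtain rfl : k = true := by simpa using hk
      obtain ⟨a, c, p, hp, h⟩ := hstart t
      exact ⟨a * m⁻¹, c, .inr ⟨p, hp, by rw [hw, map_mul, map_inv, ← h]; group⟩⟩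

end Group

end Monoid.CoprodI

theorem Subgroup.sup_zpowers_mul_left {G : Type*} [Group G] {H : Subgroup G} {x : G}
    (hx : x ∈ H) (u : G) : H ⊔ Subgroup.zpowers (x * u) = H ⊔ Subgroup.zpowers u := by
  have key : ∀ {y : G}, y ∈ H → ∀ v, H ⊔ Subgroup.zpowers (y * v) ≤ H ⊔ Subgroup.zpowers v :=
    fun hy v => sup_le le_sup_left <| Subgroup.zpowers_le.mpr <|
      mul_mem (Subgroup.mem_sup_left hy) (Subgroup.mem_sup_right (Subgroup.mem_zpowers v))
  refine le_antisymm (key hx u) ?_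
  simpa using key (inv_mem hx) (x * u)

namespace Monoid.Coprod

section Factors

variable (G H : Type*) [Group G] [Group H]

abbrev factors : Bool → Subgroup (G ∗ H) :=
  fun b => cond b (inr : H →* G ∗ H).range (inl : G →* G ∗ H).range

def coprodIFactorsEquiv : CoprodI (fun b => factors G H b) ≃* G ∗ H :=
  MonoidHom.toMulEquiv (CoprodI.lift fun b => (factors G H b).subtype)
    (lift ((CoprodI.of (i := false)).comp (inl : G →* G ∗ H).rangeRestrict)
      ((CoprodI.of (i := true)).comp (inr : H →* G ∗ H).rangeRestrict))
    (by
      refine CoprodI.ext_hom _ _ fun b => ?_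
      cases b <;> ext ⟨_, x, rfl⟩ <;> rfl)
    (by ext <;> rfl)

end Factors

variable {A B : Type*} [Group A] [Group B]

open CoprodI in
theorem exists_inl_mul_zpow_eq_conj (u : A ∗ B) :
    ∃ a c : A, ∀ n : ℤ, (inl a * u) ^ n ≠ 1 → ∃ p ∈ neWordProds _ true true,
      (inl a * u) ^ n = inl c * coprodIFactorsEquiv A B p * (inl c)⁻¹ := by
  set e := coprodIFactorsEquiv A B
  obtain ⟨⟨_, a, rfl⟩, ⟨_, c, rfl⟩, h⟩ := exists_of_mul_eq_one_or_conj (e.symm u)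
  refine ⟨a, c, fun n hn => ?_⟩
  have hu : inl a * u = e (of (i := false) ⟨inl a, a, rfl⟩ * e.symm u) := by
    rw [map_mul, e.apply_symm_apply]; rfl
  rcases h with h | ⟨p, hp, hpc⟩
  · exact absurd (by rw [hu, h, map_one, one_zpow]) hn
  · have hconj : (inl a * u) ^ n = inl c * e (p ^ n) * (inl c)⁻¹ := by
      rw [hu, hpc, ← map_zpow, conj_zpow, map_mul, map_mul, map_inv]; rfl
    refine ⟨p ^ n, zpow_mem_neWordProds hp n fun h' => hn ?_, hconj⟩
    rw [hconj, h', map_one, mul_one, mul_inv_cancel]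

theorem lift_inl_zpowers_subtype_injective (v : A ∗ B) (c : A)
    (hv : ∀ n : ℤ, v ^ n ≠ 1 → ∃ p ∈ CoprodI.neWordProds _ true true,
      v ^ n = inl c * coprodIFactorsEquiv A B p * (inl c)⁻¹) :
    Injective (lift (inl : A →* A ∗ B) (Subgroup.zpowers v).subtype) := by
  set e := coprodIFactorsEquiv A B
  set e' := coprodIFactorsEquiv A (Subgroup.zpowers v)
  set F := lift (inl : A →* A ∗ B) (Subgroup.zpowers v).subtype
  suffices Injective (e.symm ∘ F ∘ e') by
    rwa [EquivLike.comp_injective, EquivLike.injective_comp] at this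
  refine CoprodI.injective_of_map_of_mem_conj_neWordProds
    (e.symm.toMonoidHom.comp (F.comp e'.toMonoidHom)) (e.symm (inl c)) ?_
  rintro (_ | _) ⟨_, x, rfl⟩ hx
  · have hx1 : x ≠ 1 := by simpa [Subtype.ext_iff, map_eq_one_iff _ inl_injective] using hx
    refine ⟨e.symm (inl (c⁻¹ * x * c)), CoprodI.of_mem_neWordProds (i := false) ?_, ?_⟩
    · rw [Ne, Subtype.ext_iff, OneMemClass.coe_one, MonoidHom.coe_rangeRestrict,
        map_eq_one_iff _ inl_injective]
      rwa [mul_assoc, inv_mul_eq_one, eq_comm, mul_eq_right]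
    · change e.symm (inl x) = _
      rw [← map_inv, ← map_mul, ← map_mul, ← map_inv, ← map_mul, ← map_mul]
      group
  · obtain ⟨_, n, rfl⟩ := x
    obtain ⟨p, hp, hvp⟩ := hv n fun h => hx (by
      simp [Subtype.ext_iff, h, map_eq_one_iff _ inr_injective])
    refine ⟨p, hp, ?_⟩
    change e.symm (v ^ n) = _
    rw [hvp, map_mul, map_mul, map_inv, e.symm_apply_apply]

theorem range_lift_inl_zpowers_inl_mul (a : A) (u : A ∗ B) :
    (lift (inl : A →* A ∗ B) (Subgroup.zpowers (inl a * u)).subtype).range =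
      Subgroup.closure (Set.range (fun x : A => (inl x : A ∗ B)) ∪ {u}) := by
  rw [range_lift, Subgroup.range_subtype, Subgroup.closure_union, ← Subgroup.zpowers_eq_closure,
    ← MonoidHom.coe_range, Subgroup.closure_eq]
  exact Subgroup.sup_zpowers_mul_left (MonoidHom.mem_range.mpr ⟨a, rfl⟩) u

end Monoid.Coprod

/-- If `u ∈ A ∗ B`, then `⟨A, u⟩ = A ∗ ⟨u'⟩` for some `u' ∈ A·u`: the canonical homomorphism
from the abstract free product `A ∗ ⟨u'⟩` to `A ∗ B` is injective with image `⟨A, u⟩`. -/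
theorem free_factor_exercise {A B : Type*} [Group A] [Group B]
    (u : Monoid.Coprod A B) :
    ∃ a : A,
      Function.Injective
        (Monoid.Coprod.lift (Monoid.Coprod.inl : A →* Monoid.Coprod A B)
          (Subgroup.zpowers (Monoid.Coprod.inl a * u)).subtype) ∧
      (Monoid.Coprod.lift (Monoid.Coprod.inl : A →* Monoid.Coprod A B)
          (Subgroup.zpowers (Monoid.Coprod.inl a * u)).subtype).range =
        Subgroup.closure
          (Set.range (fun x : A => (Monoid.Coprod.inl x : Monoid.Coprod A B)) ∪ {u}) := by
  obtain ⟨a, c, hu⟩ := Monoid.Coprod.exists_inl_mul_zpow_eq_conj u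
  exact ⟨a, Monoid.Coprod.lift_inl_zpowers_subtype_injective _ c hu,
    Monoid.Coprod.range_lift_inl_zpowers_inl_mul a u⟩
end

section
/- In the group Q = ⟨g, t | g³ = 1, [g,t]³ = 1⟩, the elements x = t̄⁻¹ḡt̄·ḡ and y = ḡ·t̄⁻¹ḡt̄ commute and generate a free abelian group of rank two: the group homomorphism ℤ × ℤ → Q sending (m,n) to x^m · y^n is injective. -/
/-- `C₃`, cyclic of order 3. -/
abbrev C3 : Type := Multiplicative (ZMod 3)

/-- The generator `g` of `C₃`. -/
def gC3 : C3 := Multiplicative.ofAdd (1 : ZMod 3)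

/-- `F₃ = C₃ ∗ ⟨t⟩`. -/
abbrev F3 : Type := Monoid.Coprod C3 (FreeGroup Unit)

/-- The image of `g` in `F₃`. -/
def gF : F3 := Monoid.Coprod.inl gC3

/-- The generator `t` of `F₃`. -/
def tF : F3 := Monoid.Coprod.inr (FreeGroup.of ())

/-- The word `w = [g, t] = g⁻¹t⁻¹gt`. -/
def wF : F3 := gF⁻¹ * tF⁻¹ * gF * tF

/-- `Q = ⟨g, t ∣ g³ = 1, [g,t]³ = 1⟩`. -/
abbrev Q : Type := F3 ⧸ Subgroup.normalClosure {wF ^ 3}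

/-- The image of `g` in `Q`. -/
def gQ : Q := QuotientGroup.mk' (Subgroup.normalClosure {wF ^ 3}) gF

/-- The image of `t` in `Q`. -/
def tQ : Q := QuotientGroup.mk' (Subgroup.normalClosure {wF ^ 3}) tF

/-!
`Q` acts on the Eisenstein lattice `ℤ[ω]` with `g` acting as the rotation `z ↦ ωz` and `t` as
the reflection `z ↦ z̄ + 1`. Then `[g, t]` acts as a rotation by `ω` about some point, so it
has order 3 and the action factors through `Q`; and `x`, `y` act as the translations by
`-2 - ω` and `1 - ω`, which are linearly independent. That `x` and `y` commute is a formal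
consequence of `g³ = (t⁻¹gt)³ = (g⁻¹ · t⁻¹gt)³ = 1`.
-/

theorem commute_mul_mul_of_pow_three_eq_one {G : Type*} [Group G] {a b : G} (ha : a ^ 3 = 1)
    (hb : b ^ 3 = 1) (hab : (a⁻¹ * b) ^ 3 = 1) : Commute (b * a) (a * b) := by
  have inv_of_cube {c : G} (hc : c ^ 3 = 1) : c * c = c⁻¹ :=
    eq_inv_of_mul_eq_one_left (by rw [← hc, pow_succ, sq])
  calc b * a * (a * b) = b * (a * a) * b := by group
    _ = a * (a⁻¹ * b * (a⁻¹ * b)) := by rw [inv_of_cube ha]; group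
    _ = a * (b * b) * a := by rw [inv_of_cube hab, inv_of_cube hb]; group
    _ = a * b * (b * a) := by group

theorem injective_zpow_mul_zpow_of_map_eq_addLeft {G A : Type*} [Group G] [AddCommGroup A]
    (f : G →* Equiv.Perm A) {x y : G} {u v : A} (hx : f x = Equiv.addLeft u)
    (hy : f y = Equiv.addLeft v) (huv : LinearIndependent ℤ ![u, v]) :
    Function.Injective fun p : ℤ × ℤ => x ^ p.1 * y ^ p.2 := by
  intro p q hpq
  have hA : p.1 • u + p.2 • v = q.1 • u + q.2 • v := by
    simpa [hx, hy] using congrArg (fun z => f z 0) hpq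
  obtain ⟨h₁, h₂⟩ := LinearIndependent.pair_iff.mp huv (p.1 - q.1) (p.2 - q.2) <| by
    rw [sub_smul, sub_smul, ← add_sub_add_comm, hA, sub_self]
  exact Prod.ext (sub_eq_zero.mp h₁) (sub_eq_zero.mp h₂)

section Lift

variable {H : Type*} [Group H] (a b : H)

def liftC3 (ha : a ^ 3 = 1) : C3 →* H :=
  AddMonoidHom.toMultiplicativeLeft <|
    ZMod.lift 3 ⟨zmultiplesHom _ (Additive.ofMul a), by simp [← ofMul_zpow, ha]⟩

lemma liftC3_gC3 (ha : a ^ 3 = 1) : liftC3 a ha gC3 = a :=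
  -- `gC3` is the class of `(1 : ℤ)`, so the left side unfolds to `a ^ (1 : ℤ)`
  zpow_one a

def liftQ (ha : a ^ 3 = 1) (hab : (a⁻¹ * b⁻¹ * a * b) ^ 3 = 1) : Q →* H :=
  QuotientGroup.lift _ (Monoid.Coprod.lift (liftC3 a ha) (FreeGroup.lift fun _ => b)) <|
    Subgroup.normalClosure_le_normal <| Set.singleton_subset_iff.mpr <| by
      simpa [wF, gF, tF, liftC3_gC3] using hab

variable {a b} (ha : a ^ 3 = 1) (hab : (a⁻¹ * b⁻¹ * a * b) ^ 3 = 1)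

@[simp] lemma liftQ_gQ : liftQ a b ha hab gQ = a := by
  simp [liftQ, gQ, gF, liftC3_gC3]

@[simp] lemma liftQ_tQ : liftQ a b ha hab tQ = b := by
  simp [liftQ, tQ, tF]

end Lift

lemma gQ_pow_three : gQ ^ 3 = 1 := by
  have : gC3 ^ 3 = 1 := by decide
  rw [gQ, gF, ← map_pow, ← map_pow, this, map_one, map_one]

lemma commutator_gQ_tQ_pow_three : (gQ⁻¹ * tQ⁻¹ * gQ * tQ) ^ 3 = 1 :=
  (QuotientGroup.eq_one_iff (wF ^ 3)).mpr (Subgroup.subset_normalClosure rfl)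

namespace EisensteinLattice

/-- `(a, b)` stands for `a + bω`, with `ω² = -1 - ω`; this is multiplication by `ω`. -/
@[simps]
def mulOmega : Equiv.Perm (ℤ × ℤ) where
  toFun p := (-p.2, p.1 - p.2)
  invFun p := (p.2 - p.1, -p.1)
  left_inv p := by simp
  right_inv p := by simp

/-- `z ↦ z̄ + 1`, using `ω̄ = -1 - ω`. -/
@[simps]
def conjAddOne : Equiv.Perm (ℤ × ℤ) where
  toFun p := (p.1 - p.2 + 1, -p.2)
  invFun p := (p.1 - p.2 - 1, -p.2)
  left_inv p := by ext <;> simp; ring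
  right_inv p := by ext <;> simp; ring

lemma mulOmega_pow_three : mulOmega ^ 3 = 1 := by
  ext p <;> simp [pow_succ]; ring

lemma commutator_pow_three :
    (mulOmega⁻¹ * conjAddOne⁻¹ * mulOmega * conjAddOne) ^ 3 = 1 := by
  ext p <;> simp [pow_succ] <;> ring

lemma conj_mul_mulOmega :
    conjAddOne⁻¹ * mulOmega * conjAddOne * mulOmega = Equiv.addLeft (-2, -1) := by
  ext p <;> simp <;> ring

lemma mulOmega_mul_conj :
    mulOmega * (conjAddOne⁻¹ * mulOmega * conjAddOne) = Equiv.addLeft (1, -1) := by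
  ext p <;> simp <;> ring

lemma linearIndependent_translations : LinearIndependent ℤ ![((-2, -1) : ℤ × ℤ), (1, -1)] := by
  refine LinearIndependent.pair_iff.mpr fun s t hst => ?_
  simp only [Prod.smul_mk, smul_eq_mul, Prod.mk_add_mk, Prod.zero_eq_mk, Prod.mk.injEq] at hst
  omega

end EisensteinLattice

/-- In `Q = ⟨g, t ∣ g³ = 1, [g,t]³ = 1⟩`, the elements `x = t⁻¹gt·g` and `y = g·t⁻¹gt`
commute and generate a free abelian group of rank two. -/
theorem free_abelian_in_Q :
    Commute (tQ⁻¹ * gQ * tQ * gQ) (gQ * (tQ⁻¹ * gQ * tQ)) ∧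
      Function.Injective
        (fun p : ℤ × ℤ =>
          (tQ⁻¹ * gQ * tQ * gQ) ^ p.1 * (gQ * (tQ⁻¹ * gQ * tQ)) ^ p.2) := by
  refine ⟨commute_mul_mul_of_pow_three_eq_one gQ_pow_three ?_ ?_, ?_⟩
  · simpa [gQ_pow_three] using conj_pow (a := tQ⁻¹) (b := gQ) (i := 3)
  · simpa only [mul_assoc] using commutator_gQ_tQ_pow_three
  · refine injective_zpow_mul_zpow_of_map_eq_addLeft
      (liftQ _ _ EisensteinLattice.mulOmega_pow_three EisensteinLattice.commutator_pow_three)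
      ?_ ?_ EisensteinLattice.linearIndependent_translations
    · simpa using EisensteinLattice.conj_mul_mulOmega
    · simpa using EisensteinLattice.mulOmega_mul_conj
end

section
/- In the Baumslag–Solitar group B = BS(1,2) = ⟨g, t | g⁻¹tg = t²⟩, the centralizer of the image of t is locally cyclic (every finitely generated subgroup of it is cyclic) but is not itself cyclic. -/
/-- The Baumslag–Solitar group `BS(1,2) = ⟨g, t ∣ g⁻¹tg = t²⟩`, as the quotient of the free
group on `g = of true`, `t = of false` by the normal closure of `g⁻¹·t·g·t⁻²`. -/
abbrev BS12 : Type :=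
  FreeGroup Bool ⧸ Subgroup.normalClosure
    {(FreeGroup.of true)⁻¹ * FreeGroup.of false * FreeGroup.of true *
      (FreeGroup.of false)⁻¹ * (FreeGroup.of false)⁻¹}

/-- The image of `t` in `BS(1,2)`. -/
def tBS : BS12 :=
  QuotientGroup.mk' _ (FreeGroup.of false)

/-!
Every element of `BS(1,2)` can be written `g^p t^k g^{-q}`, and the affine action
`t : r ↦ r + 1`, `g : r ↦ r / 2` on `ℚ` shows that such an element commutes with `t` only if
`p = q`. Hence the centralizer of `t` is the union of the increasing chain of infinite cyclic
groups `⟨g^p t g^{-p}⟩`, each of index two in the next (a copy of `ℤ[1/2]`). A finitely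
generated subgroup lies in one member of the chain and is therefore cyclic, whereas a generator
of the whole centralizer would force the chain to stop.
-/

theorem isCyclic_of_fg_of_directed {G ι : Type*} [Group G] {H : ι → Subgroup G}
    [∀ i, IsCyclic (H i)] (hdir : Directed (· ≤ ·) H) (hcover : ∀ x, ∃ i, x ∈ H i)
    {S : Subgroup G} (hS : S.FG) : IsCyclic S := by
  classical
  obtain ⟨T, rfl⟩ := hS
  choose i hi using hcover
  have : Nonempty ι := ⟨i 1⟩
  obtain ⟨j, hj⟩ := hdir.finset_le (T.image i)
  exact Subgroup.isCyclic_of_le <| (Subgroup.closure_le _).mpr fun x hx ↦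
    hj _ (Finset.mem_image_of_mem i hx) (hi x)

theorem not_isCyclic_of_forall_ne_top {G ι : Type*} [Group G] {H : ι → Subgroup G}
    (hH : ∀ i, H i ≠ ⊤) (hcover : ∀ x, ∃ i, x ∈ H i) : ¬ IsCyclic G := by
  intro hG
  obtain ⟨x, hx⟩ := hG.exists_generator
  obtain ⟨i, hi⟩ := hcover x
  exact hH i <| eq_top_iff.mpr fun y _ ↦ Subgroup.zpowers_le.mpr hi (hx y)

theorem inv_pow_mul_zpow_mul_pow_of_inv_mul_mul_eq_zpow {G : Type*} [Group G] {a b : G} {m : ℤ}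
    (h : a⁻¹ * b * a = b ^ m) (n : ℕ) (k : ℤ) :
    (a ^ n)⁻¹ * b ^ k * a ^ n = b ^ (k * m ^ n) := by
  induction n generalizing k with
  | zero => simp
  | succ n ih =>
    calc (a ^ (n + 1))⁻¹ * b ^ k * a ^ (n + 1)
        = a⁻¹ * ((a ^ n)⁻¹ * b ^ k * a ^ n) * a⁻¹⁻¹ := by group
      _ = (a⁻¹ * b * a) ^ (k * m ^ n) := by rw [ih, ← conj_zpow, inv_inv]
      _ = b ^ (k * m ^ (n + 1)) := by rw [h, ← zpow_mul]; ring_nf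

namespace BS12

def gBS : BS12 :=
  QuotientGroup.mk' _ (FreeGroup.of true)

theorem gBS_inv_mul_tBS_mul_gBS : gBS⁻¹ * tBS * gBS = tBS ^ 2 := by
  have h : gBS⁻¹ * tBS * gBS * tBS⁻¹ * tBS⁻¹ = 1 :=
    (QuotientGroup.eq_one_iff _).mpr (Subgroup.subset_normalClosure rfl)
  rw [← mul_inv_eq_one, pow_two, mul_inv_rev, ← mul_assoc, h]

theorem inv_gBS_pow_mul_tBS_zpow_mul_gBS_pow (n : ℕ) (k : ℤ) :
    (gBS ^ n)⁻¹ * tBS ^ k * gBS ^ n = tBS ^ (k * 2 ^ n) :=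
  inv_pow_mul_zpow_mul_pow_of_inv_mul_mul_eq_zpow (m := 2)
    (by simpa using gBS_inv_mul_tBS_mul_gBS) n k

theorem tBS_mul_gBS_pow (n : ℕ) : tBS * gBS ^ n = gBS ^ n * tBS ^ (2 ^ n : ℤ) := by
  rw [← one_mul ((2 : ℤ) ^ n), ← inv_gBS_pow_mul_tBS_zpow_mul_gBS_pow]
  group

theorem gBS_inv_mul_tBS_zpow (k : ℤ) : gBS⁻¹ * tBS ^ k = tBS ^ (2 * k) * gBS⁻¹ := by
  rw [mul_comm, ← pow_one (2 : ℤ), ← inv_gBS_pow_mul_tBS_zpow_mul_gBS_pow]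
  group

theorem closure_gBS_tBS_eq_top : Subgroup.closure {gBS, tBS} = ⊤ := by
  have : ({gBS, tBS} : Set BS12) = QuotientGroup.mk' _ '' Set.range FreeGroup.of := by
    rw [← Set.range_comp]
    ext
    simp [gBS, tBS, or_comm]
  rw [this, ← MonoidHom.map_closure, FreeGroup.closure_range_of, ← MonoidHom.range_eq_map,
    MonoidHom.range_eq_top]
  exact QuotientGroup.mk'_surjective _

theorem exists_eq_gBS_pow_mul_tBS_zpow_mul_inv_gBS_pow (x : BS12) :
    ∃ (p q : ℕ) (k : ℤ), x = gBS ^ p * tBS ^ k * (gBS ^ q)⁻¹ := by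
  have hx : x ∈ Subgroup.closure {gBS, tBS} := closure_gBS_tBS_eq_top ▸ Subgroup.mem_top x
  induction hx using Subgroup.closure_induction_left with
  | one => exact ⟨0, 0, 0, by simp⟩
  | mul_left a ha y _ ih =>
    obtain ⟨p, q, k, rfl⟩ := ih
    rcases ha with rfl | rfl
    · exact ⟨p + 1, q, k, by group⟩
    · exact ⟨p, q, 2 ^ p + k, by rw [← mul_assoc, ← mul_assoc, tBS_mul_gBS_pow]; group⟩
  | inv_mul_cancel a ha y _ ih =>
    obtain ⟨p, q, k, rfl⟩ := ih
    rcases ha with rfl | rfl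
    · cases p with
      | zero =>
        refine ⟨0, q + 1, 2 * k, ?_⟩
        simp only [pow_zero, one_mul, ← mul_assoc, gBS_inv_mul_tBS_zpow]
        group
      | succ p => exact ⟨p, q, k, by group⟩
    · refine ⟨p, q, -2 ^ p + k, ?_⟩
      rw [inv_mul_eq_iff_eq_mul, ← mul_assoc, ← mul_assoc, tBS_mul_gBS_pow]
      group

noncomputable def toAffine : BS12 →* ℚ ≃ᵃ[ℚ] ℚ :=
  QuotientGroup.lift _
    (FreeGroup.lift fun b ↦
      if b then AffineEquiv.homothetyUnitsMulHom 0 (Units.mk0 2⁻¹ (inv_ne_zero two_ne_zero))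
      else AffineEquiv.constVAdd ℚ ℚ 1)
    (Subgroup.normalClosure_le_normal <| Set.singleton_subset_iff.mpr <|
      MonoidHom.mem_ker.mpr <| AffineEquiv.ext fun r ↦ by
        simp only [map_mul, map_inv, FreeGroup.lift_apply_of, if_true, Bool.false_eq_true,
          if_false, AffineEquiv.inv_def, AffineEquiv.coe_homothetyUnitsMulHom_apply_symm,
          AffineEquiv.constVAdd_symm, AffineEquiv.coe_mul, Function.comp_apply,
          AffineEquiv.coe_homothetyUnitsMulHom_apply, AffineMap.homothety_apply,
          AffineEquiv.constVAdd_apply, vsub_eq_sub, vadd_eq_add, smul_eq_mul, sub_zero, add_zero,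
          Units.val_inv_eq_inv_val, Units.val_mk0, inv_inv, AffineEquiv.coe_one, id_eq]
        ring)

theorem toAffine_gBS_pow_mul_tBS_zpow_mul_inv_apply (p q : ℕ) (k : ℤ) (r : ℚ) :
    toAffine (gBS ^ p * tBS ^ k * (gBS ^ q)⁻¹) r = (2 ^ q * r + k) / 2 ^ p := by
  have hg : toAffine gBS =
      AffineEquiv.homothetyUnitsMulHom 0 (Units.mk0 2⁻¹ (inv_ne_zero two_ne_zero)) := rfl
  have ht : toAffine tBS = AffineEquiv.constVAdd ℚ ℚ 1 := rfl
  rw [map_mul, map_mul, map_inv, map_pow, map_zpow, map_pow, hg, ht, ← map_pow, ← map_pow,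
    ← AffineEquiv.constVAdd_zsmul]
  simp only [AffineEquiv.coe_mul, Function.comp_apply, AffineEquiv.inv_def,
    AffineEquiv.coe_homothetyUnitsMulHom_apply, AffineEquiv.coe_homothetyUnitsMulHom_apply_symm,
    AffineMap.homothety_apply, AffineEquiv.constVAdd_apply, vsub_eq_sub, vadd_eq_add, smul_eq_mul,
    sub_zero, add_zero, Units.val_pow_eq_pow_val, Units.val_inv_eq_inv_val, Units.val_mk0,
    zsmul_eq_mul, mul_one, inv_pow, inv_inv]
  ring

theorem toAffine_tBS_apply (r : ℚ) : toAffine tBS r = r + 1 := by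
  simpa [add_comm] using toAffine_gBS_pow_mul_tBS_zpow_mul_inv_apply 0 0 1 r

/-- `dyadicPow p k` plays the role of `t ^ (k / 2 ^ p)`. -/
def dyadicPow (p : ℕ) (k : ℤ) : BS12 :=
  gBS ^ p * tBS ^ k * (gBS ^ p)⁻¹

theorem dyadicPow_zero_left (k : ℤ) : dyadicPow 0 k = tBS ^ k := by
  simp [dyadicPow]

theorem dyadicPow_add_left (p n : ℕ) (k : ℤ) :
    dyadicPow (p + n) (k * 2 ^ n) = dyadicPow p k := by
  rw [dyadicPow, ← inv_gBS_pow_mul_tBS_zpow_mul_gBS_pow, pow_add, dyadicPow]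
  group

theorem dyadicPow_mul (p : ℕ) (a b : ℤ) :
    dyadicPow p a * dyadicPow p b = dyadicPow p (a + b) := by
  simp only [dyadicPow]
  group

theorem dyadicPow_zpow (p : ℕ) (a m : ℤ) : dyadicPow p a ^ m = dyadicPow p (a * m) := by
  rw [dyadicPow, conj_zpow, ← zpow_mul, dyadicPow]

theorem dyadicPow_injective (p : ℕ) : Function.Injective (dyadicPow p) := by
  intro a b h
  have := congrArg (toAffine · 0) h
  simp only [dyadicPow, toAffine_gBS_pow_mul_tBS_zpow_mul_inv_apply] at this
  simpa using this

theorem dyadicPow_mem_centralizer (p : ℕ) (k : ℤ) :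
    dyadicPow p k ∈ Subgroup.centralizer {tBS} := by
  have ht : tBS = dyadicPow p (2 ^ p) := by
    simpa [dyadicPow_zero_left] using (dyadicPow_add_left 0 p 1).symm
  rintro _ rfl
  rw [ht, dyadicPow_mul, dyadicPow_mul, add_comm]

theorem exists_dyadicPow_of_mem_centralizer {c : BS12} (hc : c ∈ Subgroup.centralizer {tBS}) :
    ∃ p k, c = dyadicPow p k := by
  obtain ⟨p, q, k, hpqk⟩ := exists_eq_gBS_pow_mul_tBS_zpow_mul_inv_gBS_pow c
  have h := congrArg (toAffine · 0) (hc tBS rfl)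
  simp only [map_mul, AffineEquiv.coe_mul, Function.comp_apply, toAffine_tBS_apply] at h
  rw [hpqk, toAffine_gBS_pow_mul_tBS_zpow_mul_inv_apply,
    toAffine_gBS_pow_mul_tBS_zpow_mul_inv_apply] at h
  have hqp : q = p := by
    field_simp at h
    have h2 : ((2 ^ q : ℕ) : ℚ) = (2 ^ p : ℕ) := by push_cast; linarith
    exact Nat.pow_right_injective le_rfl (Nat.cast_injective h2)
  exact ⟨p, k, hqp ▸ hpqk⟩

def dyadicSubgroup (p : ℕ) : Subgroup (Subgroup.centralizer {tBS}) :=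
  Subgroup.zpowers ⟨dyadicPow p 1, dyadicPow_mem_centralizer p 1⟩

instance (p : ℕ) : IsCyclic (dyadicSubgroup p) :=
  Subgroup.isCyclic_zpowers _

theorem mem_dyadicSubgroup_iff {p : ℕ} {c : Subgroup.centralizer {tBS}} :
    c ∈ dyadicSubgroup p ↔ ∃ k, dyadicPow p k = c := by
  simp only [dyadicSubgroup, Subgroup.mem_zpowers_iff, Subtype.ext_iff, Subgroup.coe_zpow,
    dyadicPow_zpow, one_mul]

theorem monotone_dyadicSubgroup : Monotone dyadicSubgroup :=
  monotone_nat_of_le_succ fun p ↦ Subgroup.zpowers_le.mpr <|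
    mem_dyadicSubgroup_iff.mpr ⟨2, by simpa using dyadicPow_add_left p 1 1⟩

theorem exists_mem_dyadicSubgroup (c : Subgroup.centralizer {tBS}) :
    ∃ p, c ∈ dyadicSubgroup p := by
  obtain ⟨p, k, hc⟩ := exists_dyadicPow_of_mem_centralizer c.2
  exact ⟨p, mem_dyadicSubgroup_iff.mpr ⟨k, hc.symm⟩⟩

theorem dyadicSubgroup_ne_top (p : ℕ) : dyadicSubgroup p ≠ ⊤ := by
  intro h
  obtain ⟨k, hk⟩ := mem_dyadicSubgroup_iff.mp
    (h ▸ Subgroup.mem_top (⟨dyadicPow (p + 1) 1, dyadicPow_mem_centralizer _ _⟩ :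
      Subgroup.centralizer {tBS}))
  rw [← dyadicPow_add_left p 1, (dyadicPow_injective _).eq_iff] at hk
  omega

end BS12

/-- In `BS(1,2)`, the centralizer of `t` is locally cyclic but not cyclic. -/
theorem centralizer_locally_cyclic_not_cyclic :
    (∀ S : Subgroup (Subgroup.centralizer {tBS}), S.FG → IsCyclic S) ∧
      ¬ IsCyclic (Subgroup.centralizer {tBS}) :=
  ⟨fun _ ↦ isCyclic_of_fg_of_directed BS12.monotone_dyadicSubgroup.directed_le
      BS12.exists_mem_dyadicSubgroup,
    not_isCyclic_of_forall_ne_top BS12.dyadicSubgroup_ne_top BS12.exists_mem_dyadicSubgroup⟩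
end

section
/- If w is conjugate in F to an element of the form ι(g)·t with g ∈ G, and k ≥ 1, then G̃ is isomorphic to the free product of G with a cyclic group of order k: G̃ ≅ G ∗ (ℤ/kℤ). -/
/-- `F = G ∗ ⟨t⟩`: the free product of `G` with an infinite cyclic group. -/
abbrev FP (G : Type*) [Group G] : Type _ := Monoid.Coprod G (FreeGroup Unit)

/-- The additional generator `t ∈ F`. -/
def tgen (G : Type*) [Group G] : FP G := Monoid.Coprod.inr (FreeGroup.of ())

/-- The canonical embedding `ι : G → F`. -/
def emb (G : Type*) [Group G] : G →* FP G := Monoid.Coprod.inl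

/-- The exponent-sum homomorphism `σ : F → ℤ` killing `G` and sending `t` to `1`. -/
def expSum (G : Type*) [Group G] : FP G →* Multiplicative ℤ :=
  Monoid.Coprod.lift 1 (FreeGroup.lift fun _ => Multiplicative.ofAdd (1 : ℤ))

/-- A word `w ∈ F` is unimodular if the exponent sum of `t` in `w` is `1`. -/
def Unimodular {G : Type*} [Group G] (w : FP G) : Prop :=
  expSum G w = Multiplicative.ofAdd (1 : ℤ)

/-
The substitution `t ↦ ι(g)·t` (fixing `G`) is an automorphism of `F = G ∗ ⟨t⟩`; it carries `t` to
`ι(g)·t`, hence `t^k` to a conjugate of `w^k`, so `G̃ ≅ F/⟨⟨t^k⟩⟩`. Killing a relator of the free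
factor only changes that factor, and `⟨t⟩/⟨⟨t^k⟩⟩ ≅ ℤ/kℤ`.
-/

open Subgroup

theorem IsConj.normalClosure_singleton_eq {M : Type*} [Group M] {x y : M} (h : IsConj x y) :
    normalClosure {x} = normalClosure {y} := by
  have mem_of_isConj {a b : M} (hab : IsConj a b) : b ∈ normalClosure {a} := by
    obtain ⟨c, rfl⟩ := isConj_iff.mp hab
    exact normalClosure_normal.conj_mem a (subset_normalClosure (Set.mem_singleton a)) c
  exact le_antisymm (normalClosure_le_normal (by simpa using mem_of_isConj h.symm))
    (normalClosure_le_normal (by simpa using mem_of_isConj h))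

section ZModLift

variable {M : Type*} [Group M] {k : ℕ}

def zmodLift (x : M) (hx : x ^ k = 1) : Multiplicative (ZMod k) →* M :=
  AddMonoidHom.toMultiplicativeLeft <|
    ZMod.lift k ⟨zmultiplesHom (Additive M) (Additive.ofMul x), by
      rw [zmultiplesHom_apply, natCast_zsmul, ← ofMul_pow, hx, ofMul_one]⟩

@[simp]
theorem zmodLift_ofAdd_one (x : M) (hx : x ^ k = 1) :
    zmodLift x hx (Multiplicative.ofAdd (1 : ZMod k)) = x := by
  simp only [zmodLift, AddMonoidHom.toMultiplicativeLeft_apply_apply, toAdd_ofAdd]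
  rw [← Int.cast_one, ZMod.lift_coe]
  simp

theorem MonoidHom.ext_multiplicative_zmod {f f' : Multiplicative (ZMod k) →* M}
    (h : f (Multiplicative.ofAdd (1 : ZMod k)) = f' (Multiplicative.ofAdd 1)) : f = f' := by
  refine MonoidHom.ext fun a => ?_
  obtain ⟨m, hm⟩ := ZMod.intCast_surjective (Multiplicative.toAdd a)
  have ha : a = Multiplicative.ofAdd 1 ^ m := by
    rw [← ofAdd_zsmul, zsmul_one, hm, ofAdd_toAdd]
  rw [ha, map_zpow, map_zpow, h]

end ZModLift

def FreeGroup.quotientPowEquivZMod (k : ℕ) :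
    FreeGroup Unit ⧸ normalClosure {FreeGroup.of () ^ k} ≃* Multiplicative (ZMod k) := by
  refine MonoidHom.toMulEquiv
    (QuotientGroup.lift _ (FreeGroup.lift fun _ => Multiplicative.ofAdd 1) ?_)
    (zmodLift (FreeGroup.of () : FreeGroup Unit ⧸ _) ?_) ?_ ?_
  · refine normalClosure_le_normal ?_
    simp [← ofAdd_nsmul]
  · rw [← QuotientGroup.mk_pow, QuotientGroup.eq_one_iff]
    exact subset_normalClosure rfl
  · refine QuotientGroup.monoidHom_ext _ (FreeGroup.ext_hom _ _ fun _ => ?_)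
    simp
  · exact MonoidHom.ext_multiplicative_zmod (by simp)

namespace Monoid.Coprod

variable {G H : Type*} [Group G] [Group H]

def quotientNormalClosureImageInrEquiv (S : Set H) :
    Coprod G H ⧸ normalClosure (inr '' S) ≃* Coprod G (H ⧸ normalClosure S) := by
  refine MonoidHom.toMulEquiv
    (QuotientGroup.lift _ (map (MonoidHom.id G) (QuotientGroup.mk' _)) ?_)
    (lift ((QuotientGroup.mk' _).comp inl)
      (QuotientGroup.lift _ ((QuotientGroup.mk' _).comp inr) ?_))
    ?_ ?_
  · refine normalClosure_le_normal ?_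
    rintro _ ⟨s, hs, rfl⟩
    simp [(QuotientGroup.eq_one_iff s).mpr (subset_normalClosure hs)]
  · refine normalClosure_le_normal fun s hs => ?_
    simpa using subset_normalClosure (Set.mem_image_of_mem inr hs)
  · refine QuotientGroup.monoidHom_ext _ (hom_ext ?_ ?_) <;> ext <;> simp
  · refine hom_ext ?_ (QuotientGroup.monoidHom_ext _ ?_) <;> ext <;> simp

variable {α : Type*}

def twist (c : α → G) : Coprod G (FreeGroup α) →* Coprod G (FreeGroup α) :=
  lift inl (FreeGroup.lift fun a => inl (c a) * inr (FreeGroup.of a))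

@[simp]
theorem twist_inl (c : α → G) (g : G) : twist c (inl g) = inl g :=
  lift_apply_inl _ _ g

@[simp]
theorem twist_inr_of (c : α → G) (a : α) :
    twist c (inr (FreeGroup.of a)) = inl (c a) * inr (FreeGroup.of a) := by
  simp [twist]

theorem twist_comp_twist (c d : α → G) : (twist c).comp (twist d) = twist (d * c) := by
  refine hom_ext (MonoidHom.ext fun _ => by simp) (FreeGroup.ext_hom _ _ fun a => ?_)
  simp [mul_assoc]

theorem twist_one : twist (1 : α → G) = MonoidHom.id _ :=
  hom_ext (MonoidHom.ext fun _ => by simp) (FreeGroup.ext_hom _ _ fun _ => by simp)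

def twistEquiv (c : α → G) : Coprod G (FreeGroup α) ≃* Coprod G (FreeGroup α) :=
  (twist c).toMulEquiv (twist c⁻¹) (by rw [twist_comp_twist, mul_inv_cancel, twist_one])
    (by rw [twist_comp_twist, inv_mul_cancel, twist_one])

end Monoid.Coprod

open Monoid.Coprod

def quotientNormalClosureTgenPowEquiv (G : Type*) [Group G] (k : ℕ) :
    FP G ⧸ normalClosure {tgen G ^ k} ≃* Monoid.Coprod G (Multiplicative (ZMod k)) :=
  (QuotientGroup.quotientMulEquivOfEq (by rw [Set.image_singleton, map_pow]; rfl)).trans <|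
    (quotientNormalClosureImageInrEquiv _).trans <|
      MulEquiv.coprodCongr (MulEquiv.refl G) (FreeGroup.quotientPowEquivZMod k)

theorem free_product_case_general {G : Type*} [Group G] (w : FP G)
    (hwc : ∃ g : G, IsConj w (emb G g * tgen G)) (k : ℕ) :
    Nonempty
      ((FP G ⧸ Subgroup.normalClosure {w ^ k}) ≃*
        Monoid.Coprod G (Multiplicative (ZMod k))) := by
  obtain ⟨g, hg⟩ := hwc
  obtain ⟨τ, hτ⟩ : ∃ τ : FP G ≃* FP G, τ (tgen G) = emb G g * tgen G :=
    ⟨twistEquiv fun _ => g, twist_inr_of (fun _ => g) ()⟩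
  have h : (normalClosure {tgen G ^ k}).map (τ : FP G →* FP G) = normalClosure {w ^ k} := by
    rw [map_normalClosure _ _ τ.surjective, Set.image_singleton, map_pow, MonoidHom.coe_coe, hτ]
    exact (hg.pow k).normalClosure_singleton_eq.symm
  exact ⟨(QuotientGroup.congr _ _ τ h).symm.trans (quotientNormalClosureTgenPowEquiv G k)⟩

/-- If `w` is conjugate to `ι(g)·t`, then `G̃` is the free product of `G` with a cyclic group
of order `k`. -/
theorem free_product_case {G : Type*} [Group G] (w : FP G)
    (hwc : ∃ g : G, IsConj w (emb G g * tgen G)) (k : ℕ) (hk : 1 ≤ k) :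
    Nonempty
      ((FP G ⧸ Subgroup.normalClosure {w ^ k}) ≃*
        Monoid.Coprod G (Multiplicative (ZMod k))) :=
  free_product_case_general w hwc k
end
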